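/- Let Ω be a set of states and P : Ω → 2^Ω a possibility correspondence. For every event E ⊆ Ω, the revised knowledge operator equals the standard knowledge operator with the unawareness set removed: K'(E) = K(E) \ U'(Ω), where K(E) = {ω ∈ Ω : P(ω) ⊆ E}. -/
import Mathlib

/-- Revised knowledge operator: `K'(E) = {ω : P ω ≠ ∅ ∧ P ω ⊆ E}`. -/
def Kp {Ω : Type*} (P : Ω → Set Ω) (E : Set Ω) : Set Ω :=
  {ω | P ω ≠ ∅ ∧ P ω ⊆ E}

/-- Complement of the revised knowledge operator: `¬K'(E) = Ω \ K'(E)`. -/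
def nKp {Ω : Type*} (P : Ω → Set Ω) (E : Set Ω) : Set Ω :=
  (Kp P E)ᶜ

/-- Revised unawareness operator: `U'(E) = ⋂_{i ≥ 1} (¬K')^i (E)`. -/
def Up {Ω : Type*} (P : Ω → Set Ω) (E : Set Ω) : Set Ω :=
  ⋂ i : ℕ, (nKp P)^[i + 1] E

lemma mem_nKp_of_empty {Ω : Type*} {P : Ω → Set Ω} {E : Set Ω} {ω : Ω}
    (h : P ω = ∅) : ω ∈ nKp P E := by
  simp [nKp, Kp, h]

lemma Up_univ {Ω : Type*} (P : Ω → Set Ω) :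
    Up P Set.univ = {ω | P ω = ∅} := by
  apply Set.Subset.antisymm
  · intro ω hω
    have h0 := Set.mem_iInter.mp hω 0
    by_contra hne
    exact h0 ⟨hne, Set.subset_univ _⟩
  · intro ω hω
    apply Set.mem_iInter.mpr
    intro i
    rw [Function.iterate_succ_apply']
    exact mem_nKp_of_empty hω

/-- Theorem 2: K'(E) = K(E) \ U'(Ω), where K(E) = {ω : P ω ⊆ E}. -/
theorem Kp_eq_K_diff_Up_univ {Ω : Type*} [Nonempty Ω] (P : Ω → Set Ω) (E : Set Ω) :
    Kp P E = {ω : Ω | P ω ⊆ E} \ Up P Set.univ := by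
  ext ω
  simp [Kp, Up_univ, and_comm]
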